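/- Let Ω, Ω* be compact metric spaces with Ω nonempty, and let c : Ω × Ω* → ℝ be continuous. Let μ₁, μ₂ be Borel probability measures on Ω and ν a Borel probability measure on Ω*. For i = 1, 2 suppose φᵢ ∈ C(Ω, ℝ) is a Kantorovich potential for (μᵢ, ν), i.e. a global minimizer over C(Ω, ℝ) of φ ↦ ∫_{Ω*} φ^c dν − ∫_Ω φ dμᵢ, where φ^c(y) = sup_{x ∈ Ω} (φ(x) − c(x, y)). Let U ⊆ Ω be a Borel set such that μ₁(A) ≤ μ₂(A) for every Borel A ⊆ U, and φ₁ ≤ φ₂ on Ω \ U. Then the pointwise minimum φ₁ ⊓ φ₂ is a Kantorovich potential for (μ₁, ν), the pointwise maximum φ₁ ⊔ φ₂ is a Kantorovich potential for (μ₂, ν), and ∫_Ω (φ₁ − φ₂)⁺ d|μ₂ − μ₁| = 0, where |μ₂ − μ₁| is the total variation measure of the signed measure μ₂ − μ₁ (hence φ₁ ≤ φ₂ on the support of μ₂ − μ₁). -/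

import Mathlib

/-!
Write `f = (φ₁ - φ₂)⁺`, so that `φ₁ ⊓ φ₂ = φ₁ - f` and `φ₁ ⊔ φ₂ = φ₂ + f`. The c-transform is
submodular, `(φ₁ ⊓ φ₂)^c + (φ₁ ⊔ φ₂)^c ≤ φ₁^c + φ₂^c`, hence
`J₀(μ₁, φ₁ ⊓ φ₂) + J₀(μ₂, φ₁ ⊔ φ₂) + ∫ f d(μ₂ - μ₁) ≤ J₀(μ₁, φ₁) + J₀(μ₂, φ₂)`.
As `f` vanishes off `U`, where `μ₂ - μ₁` is a nonnegative measure, the integral is nonnegative,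
and minimality of `φ₁` and `φ₂` forces all three inequalities to be equalities. Finally
`|μ₂ - μ₁| = μ₂ - μ₁` on `U`, so `∫ f d|μ₂ - μ₁| = ∫ f d(μ₂ - μ₁) = 0`.
-/

open MeasureTheory Set
open scoped ENNReal

lemma Continuous.integrable_of_compactSpace {X E : Type*} [TopologicalSpace X] [CompactSpace X]
    [MeasurableSpace X] [OpensMeasurableSpace X] [NormedAddCommGroup E] {μ : Measure X}
    [IsFiniteMeasureOnCompacts μ] {f : X → E} (hf : Continuous f) : Integrable f μ :=
  hf.integrable_of_hasCompactSupport (.of_compactSpace f)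

section CTransform

variable {Ω Ωs : Type*} [TopologicalSpace Ω] [TopologicalSpace Ωs]

noncomputable def cTransform (c : Ω × Ωs → ℝ) (φ : C(Ω, ℝ)) (y : Ωs) : ℝ :=
  ⨆ x, φ x - c (x, y)

variable [CompactSpace Ω] {c : Ω × Ωs → ℝ}

lemma bddAbove_range_sub_cost (hc : Continuous c) (φ : C(Ω, ℝ)) (y : Ωs) :
    BddAbove (range fun x => φ x - c (x, y)) :=
  (isCompact_range (by fun_prop)).bddAbove

lemma continuous_cTransform (hc : Continuous c) (φ : C(Ω, ℝ)) : Continuous (cTransform c φ) := by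
  have h := isCompact_univ.continuous_sSup (f := fun y x => φ x - c (x, y)) (by fun_prop)
  simp only [image_univ] at h
  exact h

lemma monotone_cTransform (hc : Continuous c) : Monotone (cTransform c) :=
  fun _ ψ h y => ciSup_mono (bddAbove_range_sub_cost hc ψ y) fun x => sub_le_sub_right (h x) _

lemma cTransform_sup (hc : Continuous c) (φ ψ : C(Ω, ℝ)) :
    cTransform c (φ ⊔ ψ) = cTransform c φ ⊔ cTransform c ψ := by
  ext y
  simp only [cTransform, ContinuousMap.sup_apply, Pi.sup_apply, ← max_sub_sub_right]
  exact ciSup_sup_eq (bddAbove_range_sub_cost hc φ y) (bddAbove_range_sub_cost hc ψ y)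

lemma cTransform_inf_add_cTransform_sup_le (hc : Continuous c) (φ ψ : C(Ω, ℝ)) :
    cTransform c (φ ⊓ ψ) + cTransform c (φ ⊔ ψ) ≤ cTransform c φ + cTransform c ψ := by
  intro y
  have hinf := (monotone_cTransform hc).map_inf_le φ ψ y
  simp only [cTransform_sup hc, Pi.add_apply, Pi.sup_apply, Pi.inf_apply] at hinf ⊢
  linarith [min_add_max (cTransform c φ y) (cTransform c ψ y)]

lemma integral_cTransform_inf_add_sup_le [MeasurableSpace Ωs] [OpensMeasurableSpace Ωs]
    [CompactSpace Ωs] (hc : Continuous c) (ν : Measure Ωs) [IsFiniteMeasure ν]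
    (φ ψ : C(Ω, ℝ)) :
    ∫ y, cTransform c (φ ⊓ ψ) y ∂ν + ∫ y, cTransform c (φ ⊔ ψ) y ∂ν
      ≤ ∫ y, cTransform c φ y ∂ν + ∫ y, cTransform c ψ y ∂ν := by
  have hint (φ : C(Ω, ℝ)) : Integrable (cTransform c φ) ν :=
    (continuous_cTransform hc φ).integrable_of_compactSpace
  rw [← integral_add (hint _) (hint _), ← integral_add (hint _) (hint _)]
  exact integral_mono ((hint _).add (hint _)) ((hint _).add (hint _))
    (cTransform_inf_add_cTransform_sup_le hc φ ψ)

end CTransform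

section KantorovichDual

variable {Ω Ωs : Type*} [TopologicalSpace Ω] [MeasurableSpace Ω] [TopologicalSpace Ωs]
  [MeasurableSpace Ωs]

noncomputable def kantorovichDual (c : Ω × Ωs → ℝ) (ν : Measure Ωs) (μ : Measure Ω)
    (φ : C(Ω, ℝ)) : ℝ :=
  ∫ y, cTransform c φ y ∂ν - ∫ x, φ x ∂μ

variable [CompactSpace Ω] [OpensMeasurableSpace Ω] [CompactSpace Ωs] [OpensMeasurableSpace Ωs]
  {c : Ω × Ωs → ℝ}

lemma kantorovichDual_inf_add_kantorovichDual_sup_le (hc : Continuous c) (ν : Measure Ωs)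
    [IsFiniteMeasure ν] (μ₁ μ₂ : Measure Ω) [IsFiniteMeasure μ₁] [IsFiniteMeasure μ₂]
    (φ₁ φ₂ : C(Ω, ℝ)) :
    kantorovichDual c ν μ₁ (φ₁ ⊓ φ₂) + kantorovichDual c ν μ₂ (φ₁ ⊔ φ₂)
        + (∫ x, (φ₁ - φ₂)⁺ x ∂μ₂ - ∫ x, (φ₁ - φ₂)⁺ x ∂μ₁)
      ≤ kantorovichDual c ν μ₁ φ₁ + kantorovichDual c ν μ₂ φ₂ := by
  have hint (μ : Measure Ω) [IsFiniteMeasure μ] (φ : C(Ω, ℝ)) : Integrable φ μ :=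
    φ.continuous.integrable_of_compactSpace
  have hinf : ∫ x, (φ₁ ⊓ φ₂) x ∂μ₁ = ∫ x, φ₁ x ∂μ₁ - ∫ x, (φ₁ - φ₂)⁺ x ∂μ₁ := by
    rw [inf_eq_sub_posPart_sub]
    exact integral_sub (hint _ _) (hint _ _)
  have hsup : ∫ x, (φ₁ ⊔ φ₂) x ∂μ₂ = ∫ x, φ₂ x ∂μ₂ + ∫ x, (φ₁ - φ₂)⁺ x ∂μ₂ := by
    rw [sup_eq_add_posPart_sub]
    exact integral_add (hint _ _) (hint _ _)
  have hν := integral_cTransform_inf_add_sup_le hc ν φ₁ φ₂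
  simp only [kantorovichDual]
  linarith

end KantorovichDual

namespace MeasureTheory

variable {X : Type*} [MeasurableSpace X] {μ₁ μ₂ : Measure X} {U : Set X}

lemma Measure.restrict_le_restrict_of_forall_subset (hU : MeasurableSet U)
    (h : ∀ A ⊆ U, MeasurableSet A → μ₁ A ≤ μ₂ A) : μ₁.restrict U ≤ μ₂.restrict U :=
  Measure.le_iff.2 fun s hs => by
    rw [Measure.restrict_apply hs, Measure.restrict_apply hs]
    exact h _ inter_subset_right (hs.inter hU)

lemma integral_eq_integral_restrict_sub_add [IsFiniteMeasure μ₁]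
    (hle : μ₁.restrict U ≤ μ₂.restrict U) {f : X → ℝ} (hf : Integrable f μ₂)
    (hfU : ∀ x ∉ U, f x = 0) :
    ∫ x, f x ∂μ₂ = ∫ x, f x ∂(μ₂.restrict U - μ₁.restrict U) + ∫ x, f x ∂μ₁ := by
  rw [← setIntegral_eq_integral_of_forall_compl_eq_zero hfU (μ := μ₁),
    ← setIntegral_eq_integral_of_forall_compl_eq_zero hfU (μ := μ₂),
    ← integral_add_measure (hf.restrict.mono_measure Measure.sub_le)
      (hf.restrict.mono_measure hle),
    Measure.sub_add_cancel_of_le hle]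

lemma restrict_totalVariation_sub_of_restrict_le [IsFiniteMeasure μ₁] [IsFiniteMeasure μ₂]
    (hU : MeasurableSet U) (hle : μ₁.restrict U ≤ μ₂.restrict U) :
    (μ₂.toSignedMeasure - μ₁.toSignedMeasure).totalVariation.restrict U
      = μ₂.restrict U - μ₁.restrict U := by
  rw [SignedMeasure.totalVariation, Measure.toJordanDecomposition_toSignedMeasure_sub,
    Measure.jordanDecompositionOfToSignedMeasureSub_posPart,
    Measure.jordanDecompositionOfToSignedMeasureSub_negPart, Measure.restrict_add,
    Measure.restrict_sub_eq_restrict_sub_restrict hU,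
    Measure.restrict_sub_eq_restrict_sub_restrict hU, Measure.sub_eq_zero_of_le hle, add_zero]

lemma lintegral_totalVariation_sub_of_restrict_le [IsFiniteMeasure μ₁] [IsFiniteMeasure μ₂]
    (hU : MeasurableSet U) (hle : μ₁.restrict U ≤ μ₂.restrict U) {g : X → ℝ≥0∞}
    (hg : g.support ⊆ U) :
    ∫⁻ x, g x ∂(μ₂.toSignedMeasure - μ₁.toSignedMeasure).totalVariation
      = ∫⁻ x, g x ∂(μ₂.restrict U - μ₁.restrict U) := by
  rw [← setLIntegral_eq_of_support_subset hg, restrict_totalVariation_sub_of_restrict_le hU hle]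

end MeasureTheory

theorem comparison_principle_kantorovich_potentials_general
    {Ω Ωs : Type*} [MetricSpace Ω] [CompactSpace Ω]
    [MeasurableSpace Ω] [BorelSpace Ω]
    [MetricSpace Ωs] [CompactSpace Ωs] [MeasurableSpace Ωs] [BorelSpace Ωs]
    (c : Ω × Ωs → ℝ) (hc : Continuous c)
    (μ₁ μ₂ : Measure Ω) [IsProbabilityMeasure μ₁] [IsProbabilityMeasure μ₂]
    (ν : Measure Ωs) [IsProbabilityMeasure ν]
    (J : Measure Ω → C(Ω, ℝ) → ℝ)
    (hJ : ∀ (μ : Measure Ω) (φ : C(Ω, ℝ)),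
      J μ φ = ∫ y, (⨆ x : Ω, (φ x - c (x, y))) ∂ν - ∫ x, φ x ∂μ)
    (φ₁ φ₂ : C(Ω, ℝ))
    (h₁ : ∀ ψ : C(Ω, ℝ), J μ₁ φ₁ ≤ J μ₁ ψ)
    (h₂ : ∀ ψ : C(Ω, ℝ), J μ₂ φ₂ ≤ J μ₂ ψ)
    (U : Set Ω) (hU : MeasurableSet U)
    (hμ : ∀ A : Set Ω, A ⊆ U → MeasurableSet A → μ₁ A ≤ μ₂ A)
    (hφ : ∀ x ∈ Uᶜ, φ₁ x ≤ φ₂ x) :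
    (∀ ψ : C(Ω, ℝ), J μ₁ (φ₁ ⊓ φ₂) ≤ J μ₁ ψ) ∧
      (∀ ψ : C(Ω, ℝ), J μ₂ (φ₁ ⊔ φ₂) ≤ J μ₂ ψ) ∧
      ∫⁻ x, ENNReal.ofReal (φ₁ x - φ₂ x)
        ∂(μ₂.toSignedMeasure - μ₁.toSignedMeasure).totalVariation = 0 := by
  obtain rfl : J = kantorovichDual c ν := funext fun μ => funext (hJ μ)
  set f := (φ₁ - φ₂)⁺
  set ρ := μ₂.restrict U - μ₁.restrict U
  have hle : μ₁.restrict U ≤ μ₂.restrict U := Measure.restrict_le_restrict_of_forall_subset hU hμ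
  have hfU : ∀ x ∉ U, f x = 0 := fun x hx => posPart_eq_zero.2 (sub_nonpos.2 (hφ x hx))
  have hsplit : ∫ x, f x ∂μ₂ = ∫ x, f x ∂ρ + ∫ x, f x ∂μ₁ :=
    integral_eq_integral_restrict_sub_add hle f.continuous.integrable_of_compactSpace hfU
  have hρ : 0 ≤ ∫ x, f x ∂ρ := integral_nonneg fun x => posPart_nonneg _
  have key := kantorovichDual_inf_add_kantorovichDual_sup_le hc ν μ₁ μ₂ φ₁ φ₂
  have hinf := h₁ (φ₁ ⊓ φ₂)
  have hsup := h₂ (φ₁ ⊔ φ₂)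
  have hρ0 : ∫ x, f x ∂ρ = 0 := by linarith
  refine ⟨fun ψ => by linarith [h₁ ψ], fun ψ => by linarith [h₂ ψ], ?_⟩
  have hofReal : (fun x => ENNReal.ofReal (φ₁ x - φ₂ x)) = fun x => ENNReal.ofReal (f x) := by
    funext x
    simp [f, posPart_def]
  rw [hofReal, lintegral_totalVariation_sub_of_restrict_le hU hle
      (Function.support_subset_iff'.2 fun x hx => by simp [hfU x hx]),
    ← ofReal_integral_eq_lintegral_ofReal f.continuous.integrable_of_compactSpace
      (ae_of_all _ fun x => posPart_nonneg _), hρ0, ENNReal.ofReal_zero]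

/-- Comparison principle for Kantorovich potentials, i.e. global
minimizers of `φ ↦ ∫ φ^c dν − ∫ φ dμ` where `φ^c` is the c-transform. -/
theorem comparison_principle_kantorovich_potentials
    {Ω Ωs : Type*} [MetricSpace Ω] [CompactSpace Ω] [Nonempty Ω]
    [MeasurableSpace Ω] [BorelSpace Ω]
    [MetricSpace Ωs] [CompactSpace Ωs] [MeasurableSpace Ωs] [BorelSpace Ωs]
    (c : Ω × Ωs → ℝ) (hc : Continuous c)
    (μ₁ μ₂ : Measure Ω) [IsProbabilityMeasure μ₁] [IsProbabilityMeasure μ₂]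
    (ν : Measure Ωs) [IsProbabilityMeasure ν]
    (J : Measure Ω → C(Ω, ℝ) → ℝ)
    (hJ : ∀ (μ : Measure Ω) (φ : C(Ω, ℝ)),
      J μ φ = ∫ y, (⨆ x : Ω, (φ x - c (x, y))) ∂ν - ∫ x, φ x ∂μ)
    (φ₁ φ₂ : C(Ω, ℝ))
    (h₁ : ∀ ψ : C(Ω, ℝ), J μ₁ φ₁ ≤ J μ₁ ψ)
    (h₂ : ∀ ψ : C(Ω, ℝ), J μ₂ φ₂ ≤ J μ₂ ψ)
    (U : Set Ω) (hU : MeasurableSet U)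
    (hμ : ∀ A : Set Ω, A ⊆ U → MeasurableSet A → μ₁ A ≤ μ₂ A)
    (hφ : ∀ x ∈ Uᶜ, φ₁ x ≤ φ₂ x) :
    (∀ ψ : C(Ω, ℝ), J μ₁ (φ₁ ⊓ φ₂) ≤ J μ₁ ψ) ∧
      (∀ ψ : C(Ω, ℝ), J μ₂ (φ₁ ⊔ φ₂) ≤ J μ₂ ψ) ∧
      ∫⁻ x, ENNReal.ofReal (φ₁ x - φ₂ x)
        ∂(μ₂.toSignedMeasure - μ₁.toSignedMeasure).totalVariation = 0 :=
  comparison_principle_kantorovich_potentials_general c hc μ₁ μ₂ ν J hJ φ₁ φ₂ h₁ h₂ U hU hμ hφ
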